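/- arXiv:1706.04160 — 4 statements merged into one kernel-verified Lean document; each statement's English description precedes it below -/
import Mathlib

section
/- Let n ≥ 1 and let L be a strictly n-regular lattice. Then (a) L is n-regular; and (b) if n ≥ 2 and the rank of L is at least n, then L is strictly (n−1)-regular. -/
open Matrix

namespace Paper

/-- The quadratic map attached to a Gram matrix `G` over a commutative ring. -/
def Qf {R : Type*} [CommRing R] {m : ℕ} (G : Matrix (Fin m) (Fin m) R) (x : Fin m → R) : R :=
  x ⬝ᵥ (G *ᵥ x)

/-- The bilinear form attached to a Gram matrix `G`. -/
def Bf {R : Type*} [CommRing R] {m : ℕ} (G : Matrix (Fin m) (Fin m) R) (x y : Fin m → R) : R :=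
  x ⬝ᵥ (G *ᵥ y)

/-- `G` is the Gram matrix of a positive definite integral `ℤ`-lattice. -/
def IsLat {m : ℕ} (G : Matrix (Fin m) (Fin m) ℤ) : Prop := G.IsSymm ∧ G.PosDef

/-- The lattice with Gram matrix `A` is represented by the lattice with Gram matrix `G`
(the representation is `x ↦ x ᵥ* T`). -/
def Rep {R : Type*} [CommRing R] {k m : ℕ} (A : Matrix (Fin k) (Fin k) R)
    (G : Matrix (Fin m) (Fin m) R) : Prop :=
  ∃ T : Matrix (Fin k) (Fin m) R, A = T * G * Tᵀ

/-- Primitive representation: the image is a direct summand, i.e. the map `x ↦ x ᵥ* T`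
admits a linear retraction. -/
def PrimRep {R : Type*} [CommRing R] {k m : ℕ} (A : Matrix (Fin k) (Fin k) R)
    (G : Matrix (Fin m) (Fin m) R) : Prop :=
  ∃ T : Matrix (Fin k) (Fin m) R, A = T * G * Tᵀ ∧
    ∃ U : Matrix (Fin m) (Fin k) R, T * U = 1

/-- The `p`-adic localization `L_p` of an integral matrix/lattice. -/
noncomputable def padic (p : ℕ) [Fact p.Prime] {k m : ℕ} (A : Matrix (Fin k) (Fin m) ℤ) :
    Matrix (Fin k) (Fin m) ℤ_[p] := A.map (Int.cast : ℤ → ℤ_[p])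

/-- Isometry of two Gram matrices over a commutative ring. -/
def Isom {R : Type*} [CommRing R] {m : ℕ} (A B : Matrix (Fin m) (Fin m) R) : Prop :=
  ∃ T : Matrix (Fin m) (Fin m) R, IsUnit T.det ∧ A = T * B * Tᵀ

/-- `G'` belongs to the genus of `G`. -/
def InGenus {m : ℕ} (G G' : Matrix (Fin m) (Fin m) ℤ) : Prop :=
  IsLat G' ∧ ∀ (p : ℕ) [Fact p.Prime], Isom (padic p G') (padic p G)

/-- `A` is represented by the genus of `G`. -/
def GenusRep {k m : ℕ} (A : Matrix (Fin k) (Fin k) ℤ) (G : Matrix (Fin m) (Fin m) ℤ) : Prop :=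
  ∃ G' : Matrix (Fin m) (Fin m) ℤ, InGenus G G' ∧ Rep A G'

/-- `A` is primitively represented by the genus of `G`. -/
def GenusPrimRep {k m : ℕ} (A : Matrix (Fin k) (Fin k) ℤ) (G : Matrix (Fin m) (Fin m) ℤ) : Prop :=
  ∃ G' : Matrix (Fin m) (Fin m) ℤ, InGenus G G' ∧ PrimRep A G'

/-- `G` is an `n`-regular lattice. -/
def Regular (n : ℕ) {m : ℕ} (G : Matrix (Fin m) (Fin m) ℤ) : Prop :=
  ∀ A : Matrix (Fin n) (Fin n) ℤ, IsLat A → GenusRep A G → Rep A G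

/-- `G` is a strictly `n`-regular lattice. -/
def StrictlyRegular (n : ℕ) {m : ℕ} (G : Matrix (Fin m) (Fin m) ℤ) : Prop :=
  ∀ A : Matrix (Fin n) (Fin n) ℤ, IsLat A → GenusPrimRep A G → PrimRep A G

/-- The `i`-th successive minimum of the lattice with Gram matrix `G`. -/
noncomputable def mu {m : ℕ} (G : Matrix (Fin m) (Fin m) ℤ) (i : ℕ) : ℕ :=
  sInf {t : ℕ | ∃ v : Fin i → (Fin m → ℤ), LinearIndependent ℤ v ∧ ∀ j, Qf G (v j) ≤ (t : ℤ)}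

/-- Two lattices are similar if one is isometric to a positive rational scaling of the other. -/
def Similar {m : ℕ} (G G' : Matrix (Fin m) (Fin m) ℤ) : Prop :=
  ∃ (r : ℚ) (T : Matrix (Fin m) (Fin m) ℤ), 0 < r ∧ IsUnit T.det ∧
    G'.map (Int.cast : ℤ → ℚ) = r • ((T * G * Tᵀ).map (Int.cast : ℤ → ℚ))

/-- The norm ideal `n(L)` of a lattice. -/
def NormIdeal {m : ℕ} (G : Matrix (Fin m) (Fin m) ℤ) : Ideal ℤ :=
  Ideal.span (Set.range (Qf G))

/-- The scale ideal `s(L)` of a lattice. -/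
def ScaleIdeal {m : ℕ} (G : Matrix (Fin m) (Fin m) ℤ) : Ideal ℤ :=
  Ideal.span {a : ℤ | ∃ i j, G i j = a}

/-- A lattice is normalized if its norm ideal is `2ℤ`. -/
def Normalized {m : ℕ} (G : Matrix (Fin m) (Fin m) ℤ) : Prop :=
  NormIdeal G = Ideal.span {(2 : ℤ)}

/-- The Watson sublattice `Λ_k(L)`, as a subset of the underlying module. -/
def Lambda {R : Type*} [CommRing R] (k : ℕ) {m : ℕ} (G : Matrix (Fin m) (Fin m) R) :
    Set (Fin m → R) :=
  {x | ∀ z, (k : R) ∣ Qf G (x + z) - Qf G z}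

/-- The Watson sublattice `Λ_k` of a sublattice `S` (with the quadratic map inherited
from the ambient Gram matrix `G`). -/
def LambdaIn {R : Type*} [CommRing R] (k : ℕ) {m : ℕ} (G : Matrix (Fin m) (Fin m) R)
    (S : Set (Fin m → R)) : Set (Fin m → R) :=
  {x ∈ S | ∀ z ∈ S, (k : R) ∣ Qf G (x + z) - Qf G z}

lemma Qf_add {R : Type*} [CommRing R] {m : ℕ} (G : Matrix (Fin m) (Fin m) R)
    (x z : Fin m → R) :
    Qf G (x + z) = Qf G x + Qf G z + (x ⬝ᵥ (G *ᵥ z) + z ⬝ᵥ (G *ᵥ x)) := by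
  simp [Qf, Matrix.mulVec_add, dotProduct_add, add_dotProduct]
  ring

lemma Qf_smul {R : Type*} [CommRing R] {m : ℕ} (G : Matrix (Fin m) (Fin m) R)
    (c : R) (x : Fin m → R) : Qf G (c • x) = c ^ 2 * Qf G x := by
  simp [Qf, Matrix.mulVec_smul, smul_dotProduct, dotProduct_smul, smul_eq_mul]
  ring

/-- The Watson sublattice `Λ_k(L)` as a `ℤ`-submodule. -/
def LambdaMod (k : ℕ) {m : ℕ} (G : Matrix (Fin m) (Fin m) ℤ) : Submodule ℤ (Fin m → ℤ) where
  carrier := Lambda k G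
  zero_mem' := by intro z; simp
  add_mem' := by
    intro x y hx hy z
    have h := dvd_add (hx (y + z)) (hy z)
    have e : Qf G (x + (y + z)) - Qf G (y + z) + (Qf G (y + z) - Qf G z)
        = Qf G (x + y + z) - Qf G z := by
      rw [add_assoc]; ring
    exact e ▸ h
  smul_mem' := by
    intro c x hx z
    have h0 : (k : ℤ) ∣ Qf G x := by simpa [Qf] using hx 0
    have hz : (k : ℤ) ∣ Qf G x + (x ⬝ᵥ (G *ᵥ z) + z ⬝ᵥ (G *ᵥ x)) := by
      have := hx z
      rwa [Qf_add, show Qf G x + Qf G z + (x ⬝ᵥ (G *ᵥ z) + z ⬝ᵥ (G *ᵥ x)) - Qf G z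
          = Qf G x + (x ⬝ᵥ (G *ᵥ z) + z ⬝ᵥ (G *ᵥ x)) by ring] at this
    have hcross : (k : ℤ) ∣ (x ⬝ᵥ (G *ᵥ z) + z ⬝ᵥ (G *ᵥ x)) := by
      simpa using dvd_sub hz h0
    have key : Qf G (c • x + z) - Qf G z
        = c ^ 2 * Qf G x + c * (x ⬝ᵥ (G *ᵥ z) + z ⬝ᵥ (G *ᵥ x)) := by
      have e1 : (c • x) ⬝ᵥ (G *ᵥ z) = c * (x ⬝ᵥ (G *ᵥ z)) := by
        rw [smul_dotProduct, smul_eq_mul]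
      have e2 : z ⬝ᵥ (G *ᵥ (c • x)) = c * (z ⬝ᵥ (G *ᵥ x)) := by
        rw [Matrix.mulVec_smul, dotProduct_smul, smul_eq_mul]
      rw [Qf_add, Qf_smul, e1, e2]
      ring
    rw [key]
    exact dvd_add (Dvd.dvd.mul_left h0 _) (Dvd.dvd.mul_left hcross c)

/-- The set of values of `Q` on `L_p` is all of `2ℤ_p`. -/
def QValuesFull (p : ℕ) [Fact p.Prime] {m : ℕ} (G : Matrix (Fin m) (Fin m) ℤ) : Prop :=
  Set.range (Qf (padic p G)) = {a : ℤ_[p] | (2 : ℤ_[p]) ∣ a}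

/-- One Watson step followed by scaling by `r`:
`G'` is a Gram matrix of the scaled lattice `Λ_{2p}^{(r)}(G)`. -/
def LambdaScaledStep (p : ℕ) (r : ℚ) {m : ℕ} (G G' : Matrix (Fin m) (Fin m) ℤ) : Prop :=
  ∃ T : Matrix (Fin m) (Fin m) ℤ, LinearIndependent ℤ (fun i => T i) ∧
    Submodule.span ℤ (Set.range T) = LambdaMod (2 * p) G ∧
    G'.map (Int.cast : ℤ → ℚ) = r • ((T * G * Tᵀ).map (Int.cast : ℤ → ℚ))

/-- An admissible chain of scaled Watson transformations at `p`, starting from `G`: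
every intermediate lattice is normalized. -/
def AdmissibleChain (p : ℕ) {m : ℕ} (G : Matrix (Fin m) (Fin m) ℤ) (l : ℕ)
    (rs : Fin l → ℚ) (Ls : Fin (l + 1) → Matrix (Fin m) (Fin m) ℤ) : Prop :=
  Ls 0 = G ∧ (∀ i, 0 < rs i) ∧
  ∀ i : Fin l, LambdaScaledStep p (rs i) (Ls i.castSucc) (Ls i.succ) ∧ Normalized (Ls i.succ)

/-- `L'_p` has an orthogonal direct summand isometric to the hyperbolic plane over `ℤ_p`. -/
def HypSplit (p : ℕ) [Fact p.Prime] {m : ℕ} (L' : Matrix (Fin m) (Fin m) ℤ) : Prop :=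
  ∃ (T : Matrix (Fin m) (Fin m) ℤ_[p]) (i0 i1 : Fin m), i0 ≠ i1 ∧ IsUnit T.det ∧
    (T * padic p L' * Tᵀ) i0 i0 = 0 ∧ (T * padic p L' * Tᵀ) i0 i1 = 1 ∧
    (T * padic p L' * Tᵀ) i1 i0 = 1 ∧ (T * padic p L' * Tᵀ) i1 i1 = 0 ∧
    ∀ j, j ≠ i0 → j ≠ i1 →
      (T * padic p L' * Tᵀ) i0 j = 0 ∧ (T * padic p L' * Tᵀ) i1 j = 0 ∧
      (T * padic p L' * Tᵀ) j i0 = 0 ∧ (T * padic p L' * Tᵀ) j i1 = 0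

/-- The conclusions of Corollary 3.5 for the final lattice `L'` of an admissible chain:
`L'` is a normalized strictly `n`-regular lattice, `Q(L'_p) = 2ℤ_p`, and for every prime
`q ≠ p` the lattice `L'_q` is isometric to a scaling of `G_q`. -/
def GoodTarget (n p : ℕ) [Fact p.Prime] {m : ℕ} (G L' : Matrix (Fin m) (Fin m) ℤ) : Prop :=
  IsLat L' ∧ Normalized L' ∧ StrictlyRegular n L' ∧ QValuesFull p L' ∧
  ∀ (q : ℕ) [Fact q.Prime], q ≠ p →
    ∃ (c : ℚ) (T : Matrix (Fin m) (Fin m) ℤ_[q]), 0 < c ∧ IsUnit T.det ∧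
      L'.map (Int.cast : ℤ → ℚ_[q])
        = (c : ℚ_[q]) • ((T * padic q G * Tᵀ).map ((↑) : ℤ_[q] → ℚ_[q]))

end Paper

/-!
A representation of `A` by a lattice `G'` in the genus of `G` factors through the saturation
of its image, a primitive sublattice of the same rank (Smith normal form); strict
`n`-regularity represents that sublattice primitively by `G`, hence `A` is represented by `G`.
For `n - 1`: over a principal ideal domain a primitive `(n - 1)`-tuple in a module of rank
`≥ n` extends to a primitive `n`-tuple; strict `n`-regularity represents the lattice spanned by
the extended tuple primitively by `G`, and restricting to the first `n - 1` vectors stays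
primitive.
-/

namespace Matrix

variable {R : Type*} [CommRing R]

theorem vecMul_injective_of_mul_eq_one {k m : ℕ} {S : Matrix (Fin k) (Fin m) R}
    {V : Matrix (Fin m) (Fin k) R} (hSV : S * V = 1) : Function.Injective S.vecMul :=
  fun x y h => by simpa [vecMul_vecMul, hSV] using congrArg (· ᵥ* V) h

theorem vecMul_injective_of_posDef_mul_mul_conjTranspose [PartialOrder R] [StarRing R]
    {k m : ℕ} {T : Matrix (Fin k) (Fin m) R} {G : Matrix (Fin m) (Fin m) R}
    (hA : (T * G * Tᴴ).PosDef) : Function.Injective T.vecMul := by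
  rw [← T.coe_vecMulLinear, ← LinearMap.ker_eq_bot, LinearMap.ker_eq_bot']
  intro x (hx : x ᵥ* T = 0)
  by_contra hne
  have hpos := hA.dotProduct_mulVec_pos (star_ne_zero.mpr hne)
  simp [← mulVec_mulVec, ← star_vecMul, hx] at hpos

theorem exists_ne_zero_vecMul_eq_zero [Nontrivial R] {k m : ℕ} (U : Matrix (Fin m) (Fin k) R)
    (hkm : k < m) : ∃ v ≠ 0, v ᵥ* U = 0 := by
  by_contra! hU
  have hinj : Function.Injective U.vecMulLinear := by
    rw [← LinearMap.ker_eq_bot, LinearMap.ker_eq_bot']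
    exact fun v hv => by_contra fun hne => hU v hne hv
  exact hkm.not_ge (le_of_fin_injective R _ hinj)

section PID

variable [IsDomain R] [IsPrincipalIdealRing R]

theorem exists_eq_smul_dotProduct_eq_one {ι : Type*} [Fintype ι] {v : ι → R} (hv : v ≠ 0) :
    ∃ (g : R) (w c : ι → R), g ≠ 0 ∧ v = g • w ∧ w ⬝ᵥ c = 1 := by
  set g := Submodule.IsPrincipal.generator (Ideal.span (Set.range v))
  have hspan : Ideal.span (Set.range v) = Ideal.span {g} :=
    (Ideal.span_singleton_generator _).symm
  have hdvd (i : ι) : g ∣ v i := by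
    rw [← Ideal.mem_span_singleton, ← hspan]
    exact Ideal.subset_span ⟨i, rfl⟩
  choose w hw using hdvd
  obtain ⟨c, hc⟩ := (Submodule.mem_span_range_iff_exists_fun R).mp
    (Submodule.IsPrincipal.generator_mem (Ideal.span (Set.range v)))
  have hg : g ≠ 0 := fun h => hv (funext fun i => by simp [hw i, h])
  refine ⟨g, w, c, hg, funext hw, mul_left_cancel₀ hg ?_⟩
  calc g * (w ⬝ᵥ c) = ∑ i, c i • v i := by
        simp only [dotProduct, Finset.mul_sum, hw, smul_eq_mul]
        exact Finset.sum_congr rfl fun i _ => by ring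
    _ = g * 1 := by rw [hc, mul_one]

theorem exists_vecMul_eq_zero_dotProduct_eq_one {k m : ℕ} (U : Matrix (Fin m) (Fin k) R)
    (hkm : k < m) : ∃ w c : Fin m → R, w ᵥ* U = 0 ∧ w ⬝ᵥ c = 1 := by
  obtain ⟨v, hv, hvU⟩ := exists_ne_zero_vecMul_eq_zero U hkm
  obtain ⟨g, w, c, hg, rfl, hwc⟩ := exists_eq_smul_dotProduct_eq_one hv
  rw [smul_vecMul, smul_eq_zero] at hvU
  exact ⟨w, c, hvU.resolve_left hg, hwc⟩

theorem exists_mul_eq_one_submatrix_castSucc {k m : ℕ} {T : Matrix (Fin k) (Fin m) R}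
    {U : Matrix (Fin m) (Fin k) R} (hTU : T * U = 1) (hkm : k < m) :
    ∃ (S : Matrix (Fin (k + 1)) (Fin m) R) (V : Matrix (Fin m) (Fin (k + 1)) R),
      S * V = 1 ∧ S.submatrix Fin.castSucc id = T := by
  obtain ⟨w, c, hwU, hwc⟩ := exists_vecMul_eq_zero_dotProduct_eq_one U hkm
  -- projecting `c` to the kernel of `T` along the image of `U` keeps `w ⬝ᵥ c = 1`
  set u := c - U *ᵥ (T *ᵥ c)
  have hTu : T *ᵥ u = 0 := by
    rw [mulVec_sub, mulVec_mulVec, hTU, one_mulVec, sub_self]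
  have hwu : w ⬝ᵥ u = 1 := by
    rw [dotProduct_sub, dotProduct_mulVec, hwU, zero_dotProduct, sub_zero, hwc]
  have hblocks :
      fromRows T (replicateRow (Fin 1) w) * fromCols U (replicateCol (Fin 1) u) = 1 := by
    rw [fromRows_mul_fromCols, hTU, ← replicateCol_mulVec, hTu, ← replicateRow_vecMul, hwU,
      replicateCol_zero, replicateRow_zero, ← fromBlocks_one]
    congr
    ext i j
    obtain rfl := Subsingleton.elim i j
    simp [hwu]
  refine ⟨(fromRows T (replicateRow (Fin 1) w)).submatrix finSumFinEquiv.symm id,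
    (fromCols U (replicateCol (Fin 1) u)).submatrix id finSumFinEquiv.symm, ?_, ?_⟩
  · rw [← submatrix_mul _ _ _ _ _ Function.bijective_id, hblocks, submatrix_one_equiv]
  · ext i l
    simp

theorem exists_eq_mul_mul_eq_one_of_vecMul_injective {k m : ℕ} (T : Matrix (Fin k) (Fin m) R)
    (hT : Function.Injective T.vecMul) :
    ∃ (C : Matrix (Fin k) (Fin k) R) (S : Matrix (Fin k) (Fin m) R)
      (V : Matrix (Fin m) (Fin k) R), T = C * S ∧ S * V = 1 := by
  set N := LinearMap.range T.vecMulLinear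
  obtain ⟨n, snf⟩ := N.smithNormalForm (Pi.basisFun R (Fin m))
  obtain rfl : k = n := by
    have := LinearMap.finrank_range_of_inj (f := T.vecMulLinear) hT
    rw [Module.finrank_eq_card_basis snf.bN] at this
    simpa using this.symm
  have hrow (i : Fin k) : T i ∈ N := ⟨Pi.single i 1, single_one_vecMul i T⟩
  -- the rows of `S` are the Smith basis vectors spanning the saturation of `N`
  refine ⟨of fun i j => snf.bN.repr ⟨T i, hrow i⟩ j * snf.a j, of fun i => snf.bM (snf.f i),
    ((snf.bM.toMatrix (Pi.basisFun R (Fin m)))ᵀ).submatrix id snf.f, ?_, ?_⟩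
  · ext i l
    have := congrArg (fun x : N => (x : Fin m → R) l) (snf.bN.sum_repr ⟨T i, hrow i⟩)
    simp only [Submodule.coe_sum, Submodule.coe_smul, snf.snf, Finset.sum_apply] at this
    rw [← this, mul_apply]
    simp [mul_assoc]
  · ext i j
    simpa [mul_apply, Module.Basis.toMatrix_apply, mul_comm, one_apply, eq_comm] using
      congrFun (congrFun (snf.bM.toMatrix_mul_toMatrix_flip (Pi.basisFun R (Fin m))) (snf.f j))
        (snf.f i)

end PID

end Matrix

namespace Paper

section Representations

variable {R : Type*} [CommRing R] {k l m : ℕ} {A : Matrix (Fin k) (Fin k) R}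
  {B : Matrix (Fin l) (Fin l) R} {G : Matrix (Fin m) (Fin m) R}

theorem Rep.trans : Rep A B → Rep B G → Rep A G
  | ⟨C, hA⟩, ⟨T, hB⟩ => ⟨C * T, by rw [hA, hB, transpose_mul]; simp only [Matrix.mul_assoc]⟩

theorem PrimRep.trans : PrimRep A B → PrimRep B G → PrimRep A G
  | ⟨C, hA, U, hCU⟩, ⟨T, hB, V, hTV⟩ =>
    ⟨C * T, by rw [hA, hB, transpose_mul]; simp only [Matrix.mul_assoc],
      V * U, by rw [Matrix.mul_assoc, ← Matrix.mul_assoc T, hTV, Matrix.one_mul, hCU]⟩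

theorem PrimRep.rep : PrimRep A G → Rep A G
  | ⟨T, hA, _⟩ => ⟨T, hA⟩

theorem primRep_submatrix (G : Matrix (Fin m) (Fin m) R) {e : Fin k → Fin m}
    (he : Function.Injective e) : PrimRep (G.submatrix e e) G := by
  refine ⟨(1 : Matrix (Fin m) (Fin m) R).submatrix e id, ?_, (1 : Matrix _ _ R).submatrix id e, ?_⟩
  · ext i j
    simp [mul_apply, one_apply]
  · rw [← submatrix_mul _ _ _ _ _ Function.bijective_id, Matrix.mul_one, submatrix_one e he]

end Representations

theorem IsLat.mul_mul_transpose {k m : ℕ} {G : Matrix (Fin m) (Fin m) ℤ} (hG : IsLat G)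
    {S : Matrix (Fin k) (Fin m) ℤ} (hS : Function.Injective S.vecMul) : IsLat (S * G * Sᵀ) := by
  have hpos := hG.2.mul_mul_conjTranspose_same hS
  rw [conjTranspose_eq_transpose_of_trivial] at hpos
  exact ⟨isHermitian_iff_isSymm.mp hpos.1, hpos⟩

section Regularity

variable {n m : ℕ} {G : Matrix (Fin m) (Fin m) ℤ}

theorem StrictlyRegular.primRep_of_mul_eq_one (hreg : StrictlyRegular n G)
    {G' : Matrix (Fin m) (Fin m) ℤ} (hG' : InGenus G G') {S : Matrix (Fin n) (Fin m) ℤ}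
    {V : Matrix (Fin m) (Fin n) ℤ} (hSV : S * V = 1) : PrimRep (S * G' * Sᵀ) G :=
  hreg _ (hG'.1.mul_mul_transpose (vecMul_injective_of_mul_eq_one hSV)) ⟨G', hG', S, rfl, V, hSV⟩

theorem StrictlyRegular.regular (hreg : StrictlyRegular n G) : Regular n G := by
  rintro _ hA ⟨G', hG', T, rfl⟩
  rw [← conjTranspose_eq_transpose_of_trivial] at hA
  obtain ⟨C, S, V, rfl, hSV⟩ :=
    exists_eq_mul_mul_eq_one_of_vecMul_injective T
      (vecMul_injective_of_posDef_mul_mul_conjTranspose hA.2)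
  refine Rep.trans ⟨C, ?_⟩ (hreg.primRep_of_mul_eq_one hG' hSV).rep
  rw [transpose_mul]
  simp only [Matrix.mul_assoc]

theorem StrictlyRegular.of_succ (hreg : StrictlyRegular (n + 1) G) (hnm : n < m) :
    StrictlyRegular n G := by
  rintro _ - ⟨G', hG', T, rfl, U, hTU⟩
  obtain ⟨S, V, hSV, rfl⟩ := exists_mul_eq_one_submatrix_castSucc hTU hnm
  have hsub : (S * G' * Sᵀ).submatrix Fin.castSucc Fin.castSucc
      = S.submatrix Fin.castSucc id * G' * (S.submatrix Fin.castSucc id)ᵀ := by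
    simp only [submatrix_mul _ _ _ _ _ Function.bijective_id, transpose_submatrix,
      submatrix_id_id]
  exact hsub ▸ (primRep_submatrix _ (Fin.castSucc_injective n)).trans
    (hreg.primRep_of_mul_eq_one hG' hSV)

end Regularity

theorem strictly_regular_consequences_general (n m : ℕ)
    (G : Matrix (Fin m) (Fin m) ℤ) (hreg : StrictlyRegular n G) :
    Regular n G ∧ (2 ≤ n → n ≤ m → StrictlyRegular (n - 1) G) := by
  refine ⟨hreg.regular, fun hn hnm => ?_⟩
  obtain ⟨k, rfl⟩ : ∃ k, n = k + 1 := ⟨n - 1, by omega⟩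
  exact hreg.of_succ (by omega)

/-- a strictly `n`-regular lattice is `n`-regular, and (if `n ≥ 2` and the rank
is at least `n`) strictly `(n-1)`-regular. -/
theorem strictly_regular_consequences (n m : ℕ) (hn : 1 ≤ n)
    (G : Matrix (Fin m) (Fin m) ℤ) (hG : IsLat G) (hreg : StrictlyRegular n G) :
    Regular n G ∧ (2 ≤ n → n ≤ m → StrictlyRegular (n - 1) G) :=
  strictly_regular_consequences_general n m G hreg

end Paper
end

section
/- Let L be a lattice and M a sublattice of L of rank k with k < rank(L), and let M^⊥ = {x ∈ L : B(x, y) = 0 for all y ∈ M}. If n(M^⊥) ⊆ aℤ for some positive integer a, then μ_{k+1}(L) ≥ a / d(M)². -/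
/-! Write `d = d(M)`. Subtracting from `d • x` its orthogonal projection onto `M`, computed with the
adjugate of the Gram matrix of `M`, leaves an integral vector `x'` of `M^⊥`, and Pythagoras gives
`Q(x') ≤ d² Q(x)`. Of `k + 1` independent vectors of norm at most `μ_{k+1}(L)`, not all can have
`d • v` in the rank-`k` lattice `M`; for one that does not, `v'` is a nonzero vector of `M^⊥`, so
`a ≤ Q(v') ≤ d² μ_{k+1}(L)`. -/

open Matrix

namespace Paper

theorem _root_.LinearIndependent.exists_smul_notMem_span_range {R M ι κ : Type*} [CommRing R]
    [IsDomain R] [AddCommGroup M] [Module R M] [Module.IsTorsionFree R M] [Fintype ι] [Fintype κ]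
    {v : ι → M} (hv : LinearIndependent R v) (hcard : Fintype.card κ < Fintype.card ι)
    {d : R} (hd : d ≠ 0) (w : κ → M) : ∃ j, d • v j ∉ Submodule.span R (Set.range w) := by
  classical
  by_contra! hmem
  have hker : LinearMap.ker (d • LinearMap.id : M →ₗ[R] M) = ⊥ :=
    LinearMap.ker_eq_bot'.mpr fun x hx => (smul_eq_zero.mp hx).resolve_left hd
  have hdv : LinearIndependent R fun j => d • v j := hv.map' _ hker
  have hle := linearIndependent_le_span' _ hdv (Set.range w) (Set.range_subset_iff.mpr hmem)
  rw [Cardinal.mk_fintype, Nat.cast_le] at hle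
  exact (hcard.trans_le hle).not_ge (Fintype.card_range_le w)

section Projection

variable {R : Type*} [CommRing R] {m k : ℕ} {G : Matrix (Fin m) (Fin m) R}
  (T : Matrix (Fin k) (Fin m) R)

theorem Bf_comm (hG : G.IsSymm) (x y : Fin m → R) : Bf G x y = Bf G y x := by
  rw [Bf, Bf, dotProduct_mulVec, ← mulVec_transpose, hG.eq, dotProduct_comm]

theorem Qf_add_of_Bf_eq_zero (hG : G.IsSymm) {x y : Fin m → R} (h : Bf G x y = 0) :
    Qf G (x + y) = Qf G x + Qf G y := by
  have h' : y ⬝ᵥ (G *ᵥ x) = 0 := by rw [← Bf, Bf_comm hG, h]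
  rw [Qf_add, ← Bf, h, h', add_zero, add_zero]

/-- `det (T G Tᵀ) • x` minus its orthogonal projection onto the row span of `T`: the adjugate
in place of the inverse of the Gram matrix `T G Tᵀ` keeps the vector integral. -/
def scaledOrthProj (G : Matrix (Fin m) (Fin m) R) (x : Fin m → R) : Fin m → R :=
  (T * G * Tᵀ).det • x - Tᵀ *ᵥ ((T * G * Tᵀ).adjugate *ᵥ (T *ᵥ (G *ᵥ x)))

theorem mulVec_mulVec_scaledOrthProj (x : Fin m → R) :
    T *ᵥ (G *ᵥ scaledOrthProj T G x) = 0 := by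
  have hgram : ∀ c, T *ᵥ (G *ᵥ (Tᵀ *ᵥ c)) = (T * G * Tᵀ) *ᵥ c := fun c => by
    simp only [mulVec_mulVec, Matrix.mul_assoc]
  rw [scaledOrthProj, mulVec_sub, mulVec_sub, hgram, mulVec_mulVec _ (T * G * Tᵀ), mul_adjugate,
    smul_mulVec, one_mulVec, mulVec_smul, mulVec_smul, sub_self]

theorem Bf_scaledOrthProj_row (hG : G.IsSymm) (x : Fin m → R) (i : Fin k) :
    Bf G (scaledOrthProj T G x) (T i) = 0 := by
  rw [Bf_comm hG]
  exact congrFun (mulVec_mulVec_scaledOrthProj T x) i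

theorem Qf_det_smul_eq_add (hG : G.IsSymm) (x : Fin m → R) :
    Qf G ((T * G * Tᵀ).det • x) = Qf G (scaledOrthProj T G x) +
      Qf G (Tᵀ *ᵥ ((T * G * Tᵀ).adjugate *ᵥ (T *ᵥ (G *ᵥ x)))) := by
  conv_lhs => rw [← sub_add_cancel ((T * G * Tᵀ).det • x)
    (Tᵀ *ᵥ ((T * G * Tᵀ).adjugate *ᵥ (T *ᵥ (G *ᵥ x))))]
  refine Qf_add_of_Bf_eq_zero hG ?_
  rw [Bf_comm hG, Bf, dotProduct_comm, dotProduct_transpose_mulVec]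
  exact (congrArg _ (mulVec_mulVec_scaledOrthProj T x)).trans (dotProduct_zero _)

theorem det_smul_mem_span_of_scaledOrthProj_eq_zero {x : Fin m → R}
    (h : scaledOrthProj T G x = 0) :
    (T * G * Tᵀ).det • x ∈ Submodule.span R (Set.range fun i => T i) := by
  rw [sub_eq_zero.mp h, mulVec_transpose, vecMul_eq_sum]
  exact Submodule.sum_mem _ fun i _ => Submodule.smul_mem _ _ (Submodule.subset_span ⟨i, rfl⟩)

end Projection

section Integral

variable {m k : ℕ} {G : Matrix (Fin m) (Fin m) ℤ}

theorem Qf_pos (hG : G.PosDef) {x : Fin m → ℤ} (hx : x ≠ 0) : 0 < Qf G x := by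
  simpa [Qf] using hG.dotProduct_mulVec_pos hx

theorem Qf_nonneg (hG : G.PosDef) (x : Fin m → ℤ) : 0 ≤ Qf G x := by
  simpa [Qf] using hG.posSemidef.dotProduct_mulVec_nonneg x

theorem det_gram_ne_zero (hG : G.PosDef) {T : Matrix (Fin k) (Fin m) ℤ}
    (hT : LinearIndependent ℤ fun i => T i) : (T * G * Tᵀ).det ≠ 0 := by
  have hgram : (T * G * Tᵀ).PosDef := by
    simpa [conjTranspose_eq_transpose_of_trivial] using
      hG.mul_mul_conjTranspose_same (vecMul_injective_iff.mpr hT)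
  intro h0
  obtain ⟨c, hc, hgramc⟩ := exists_mulVec_eq_zero_iff.mpr h0
  simpa [hgramc] using hgram.dotProduct_mulVec_pos hc

theorem Qf_scaledOrthProj_le (hG : IsLat G) (T : Matrix (Fin k) (Fin m) ℤ) (x : Fin m → ℤ) :
    Qf G (scaledOrthProj T G x) ≤ (T * G * Tᵀ).det ^ 2 * Qf G x := by
  have h := Qf_det_smul_eq_add T hG.1 x
  rw [Qf_smul] at h
  linarith [Qf_nonneg hG.2 (Tᵀ *ᵥ ((T * G * Tᵀ).adjugate *ᵥ (T *ᵥ (G *ᵥ x))))]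

theorem exists_linearIndependent_Qf_le_mu (G : Matrix (Fin m) (Fin m) ℤ) {i : ℕ} (hi : i ≤ m) :
    ∃ v : Fin i → Fin m → ℤ, LinearIndependent ℤ v ∧ ∀ j, Qf G (v j) ≤ mu G i := by
  have hli : LinearIndependent ℤ fun j : Fin i => (Pi.single (Fin.castLE hi j) 1 : Fin m → ℤ) := by
    simpa [Function.comp_def] using
      (Pi.basisFun ℤ (Fin m)).linearIndependent.comp _ (Fin.castLE_injective hi)
  refine Nat.sInf_mem (s := {t : ℕ | ∃ v : Fin i → Fin m → ℤ, LinearIndependent ℤ v ∧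
    ∀ j, Qf G (v j) ≤ (t : ℤ)}) ⟨∑ l, (G l l).toNat, _, hli, fun j => ?_⟩
  have hdiag : Qf G (Pi.single (Fin.castLE hi j) 1) = G (Fin.castLE hi j) (Fin.castLE hi j) := by
    simp [Qf, mulVec_single, single_dotProduct]
  rw [hdiag, Nat.cast_sum]
  exact (Int.self_le_toNat _).trans
    (Finset.single_le_sum (fun l _ => Int.natCast_nonneg _) (Finset.mem_univ _))

end Integral

theorem mu_lower_bound_from_orthogonal_norm_general {m k : ℕ} (hk : k < m)
    (G : Matrix (Fin m) (Fin m) ℤ) (hG : IsLat G)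
    (T : Matrix (Fin k) (Fin m) ℤ) (hT : LinearIndependent ℤ (fun i => T i))
    (a : ℕ)
    (hnorm : ∀ x : Fin m → ℤ, (∀ i, Bf G x (T i) = 0) → (a : ℤ) ∣ Qf G x) :
    (a : ℚ) / ((T * G * Tᵀ).det : ℚ) ^ 2 ≤ (mu G (k + 1) : ℚ) := by
  obtain ⟨v, hv, hvμ⟩ := exists_linearIndependent_Qf_le_mu G hk
  have hd := det_gram_ne_zero hG.2 hT
  obtain ⟨j, hj⟩ := hv.exists_smul_notMem_span_range (by simp) hd fun i => T i
  have hproj : scaledOrthProj T G (v j) ≠ 0 := fun h =>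
    hj (det_smul_mem_span_of_scaledOrthProj_eq_zero T h)
  have hbound : (a : ℤ) ≤ (T * G * Tᵀ).det ^ 2 * mu G (k + 1) := calc
    (a : ℤ) ≤ Qf G (scaledOrthProj T G (v j)) :=
      Int.le_of_dvd (Qf_pos hG.2 hproj) (hnorm _ (Bf_scaledOrthProj_row T hG.1 _))
    _ ≤ (T * G * Tᵀ).det ^ 2 * Qf G (v j) := Qf_scaledOrthProj_le hG T _
    _ ≤ (T * G * Tᵀ).det ^ 2 * mu G (k + 1) := by gcongr; exact hvμ j
  rw [div_le_iff₀ (by positivity), mul_comm]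
  exact_mod_cast hbound

/-- if `M` is a sublattice of `L` of rank `k < rank L` (spanned by the rows of
`T`) and `n(M^⊥) ⊆ aℤ`, then `μ_{k+1}(L) ≥ a / d(M)²`. -/
theorem mu_lower_bound_from_orthogonal_norm {m k : ℕ} (hk : k < m)
    (G : Matrix (Fin m) (Fin m) ℤ) (hG : IsLat G)
    (T : Matrix (Fin k) (Fin m) ℤ) (hT : LinearIndependent ℤ (fun i => T i))
    (a : ℕ) (ha : 0 < a)
    (hnorm : ∀ x : Fin m → ℤ, (∀ i, Bf G x (T i) = 0) → (a : ℤ) ∣ Qf G x) :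
    (a : ℚ) / ((T * G * Tᵀ).det : ℚ) ^ 2 ≤ (mu G (k + 1) : ℚ) :=
  mu_lower_bound_from_orthogonal_norm_general hk G hG T hT a hnorm

end Paper
end

section
/- Let p be a prime and let K be an anisotropic ℤ_p-lattice of positive rank. Then there exists a positive integer e (depending on K) such that Q(v) ∉ p^e ℤ_p for every vector v ∈ K \ pK; that is, K does not primitively represent any p-adic integer lying in p^e ℤ_p. -/
/-!
The primitive vectors of `ℤ_p^m` form a compact set, on which `v ↦ ‖Q(v)‖` is continuous and,
by anisotropy, nowhere zero. It is therefore bounded below by some `ε > 0`, while every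
multiple of `p^e` has norm at most `p^(-e)`; any `e` with `p^(-e) < ε` works.
-/

open Matrix

namespace Paper

section QuadraticValues

variable {R : Type*} [CommRing R] {m : ℕ}

theorem continuous_Qf [TopologicalSpace R] [IsTopologicalRing R]
    (G : Matrix (Fin m) (Fin m) R) : Continuous (Qf G) :=
  continuous_id.dotProduct (continuous_const.matrix_mulVec continuous_id)

theorem Qf_map {S : Type*} [CommRing S] (f : R →+* S) (G : Matrix (Fin m) (Fin m) R)
    (v : Fin m → R) : Qf (G.map f) (f ∘ v) = f (Qf G v) := by
  rw [Qf, Qf, RingHom.map_dotProduct]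
  congr 1
  funext i
  exact (RingHom.map_mulVec f G v i).symm

end QuadraticValues

section Anisotropic

variable {p : ℕ} [Fact p.Prime] {m : ℕ}

theorem Qf_ne_zero_of_anisotropic {G : Matrix (Fin m) (Fin m) ℤ_[p]}
    (haniso : ∀ x : Fin m → ℚ_[p], Qf (G.map ((↑) : ℤ_[p] → ℚ_[p])) x = 0 → x = 0)
    {v : Fin m → ℤ_[p]} (hv : v ≠ 0) : Qf G v ≠ 0 := by
  intro hQ
  have hcoe : ((↑) : ℤ_[p] → ℚ_[p]) ∘ v = 0 :=
    haniso _ ((Qf_map PadicInt.Coe.ringHom G v).trans (by rw [hQ, map_zero]))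
  exact hv (funext fun i => PadicInt.coe_eq_zero.mp (congrFun hcoe i))

theorem isCompact_setOf_exists_not_dvd (p : ℕ) [Fact p.Prime] (m : ℕ) :
    IsCompact {v : Fin m → ℤ_[p] | ∃ i, ¬ (p : ℤ_[p]) ∣ v i} := by
  simp only [← PadicInt.norm_lt_one_iff_dvd, not_lt, Set.ofPred_exists]
  exact (isClosed_iUnion_of_finite fun i =>
    isClosed_le continuous_const (continuous_apply i).norm).isCompact

theorem exists_pos_le_norm_Qf_of_anisotropic {G : Matrix (Fin m) (Fin m) ℤ_[p]}
    (haniso : ∀ x : Fin m → ℚ_[p], Qf (G.map ((↑) : ℤ_[p] → ℚ_[p])) x = 0 → x = 0) :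
    ∃ ε > 0, ∀ v : Fin m → ℤ_[p], (∃ i, ¬ (p : ℤ_[p]) ∣ v i) → ε ≤ ‖Qf G v‖ := by
  refine (isCompact_setOf_exists_not_dvd p m).exists_forall_le'
    (continuous_Qf G).norm.continuousOn fun v ⟨i, hi⟩ => ?_
  refine norm_pos_iff.mpr (Qf_ne_zero_of_anisotropic haniso ?_)
  rintro rfl
  exact hi (dvd_zero _)

theorem norm_le_norm_pow_of_pow_dvd {x : ℤ_[p]} {e : ℕ} (h : (p : ℤ_[p]) ^ e ∣ x) :
    ‖x‖ ≤ ‖(p : ℤ_[p])‖ ^ e := by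
  obtain ⟨c, rfl⟩ := h
  rw [norm_mul, norm_pow]
  exact mul_le_of_le_one_right (by positivity) c.norm_le_one

end Anisotropic

theorem anisotropic_not_primitively_represent_small_general (p : ℕ) [Fact p.Prime] {m : ℕ}
    (G : Matrix (Fin m) (Fin m) ℤ_[p])
    (haniso : ∀ x : Fin m → ℚ_[p], Qf (G.map ((↑) : ℤ_[p] → ℚ_[p])) x = 0 → x = 0) :
    ∃ e : ℕ, 0 < e ∧ ∀ v : Fin m → ℤ_[p], (∃ i, ¬ (p : ℤ_[p]) ∣ v i) →
      ¬ ((p : ℤ_[p]) ^ e ∣ Qf G v) := by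
  obtain ⟨ε, hε, hε_le⟩ := exists_pos_le_norm_Qf_of_anisotropic haniso
  have hp : ‖(p : ℤ_[p])‖ < 1 := (PadicInt.norm_lt_one_iff_dvd _).mpr dvd_rfl
  obtain ⟨n, hn⟩ := exists_pow_lt_of_lt_one hε hp
  refine ⟨n + 1, n.succ_pos, fun v hv hdvd => ?_⟩
  have hsmall : ‖Qf G v‖ < ε := calc
    ‖Qf G v‖ ≤ ‖(p : ℤ_[p])‖ ^ (n + 1) := norm_le_norm_pow_of_pow_dvd hdvd
    _ ≤ ‖(p : ℤ_[p])‖ ^ n := pow_le_pow_of_le_one (norm_nonneg _) hp.le n.le_succ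
    _ < ε := hn
  exact (hε_le v hv).not_gt hsmall

/-- an anisotropic `ℤ_p`-lattice of positive rank does not primitively represent
any `p`-adic integer in `p^e ℤ_p`, for some positive `e` depending on the lattice. -/
theorem anisotropic_not_primitively_represent_small (p : ℕ) [Fact p.Prime] {m : ℕ}
    (hm : 0 < m) (G : Matrix (Fin m) (Fin m) ℤ_[p]) (hsymm : G.IsSymm)
    (haniso : ∀ x : Fin m → ℚ_[p], Qf (G.map ((↑) : ℤ_[p] → ℚ_[p])) x = 0 → x = 0) :
    ∃ e : ℕ, 0 < e ∧ ∀ v : Fin m → ℤ_[p], (∃ i, ¬ (p : ℤ_[p]) ∣ v i) →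
      ¬ ((p : ℤ_[p]) ^ e ∣ Qf G v) :=
  anisotropic_not_primitively_represent_small_general p G haniso

end Paper
end

section
/- Let p be a prime and L a normalized lattice such that either Q(L_p) ≠ 2ℤ_p, or p = 2 and s(L) = 2ℤ. If W is a ℚ_p-subspace of ℚ_p L = L ⊗ ℚ_p, then Λ_{2p}(W ∩ L_p) = W ∩ Λ_{2p}(L_p). -/
open Matrix

namespace Paper

/-!
Testing the defining condition of `Λ_{2p}(W ∩ L_p)` at `z = 0` gives `Q(x) ∈ 2pℤ_p`, and since
`Q(x + z) - Q(z) = Q(x) + 2B(x, z)` it remains to show `B(x, L_p) ⊆ pℤ_p`. For `p = 2` and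
`s(L) = 2ℤ` this holds for every `x`. Otherwise suppose `B(x, z)` is a unit. Writing `Q(x) = 2a`,
`Q(z) = 2t + 2c`, the equation `Q(sx + z) = 2t` becomes `a s² + B(x, z) s + c = 0`, with `p ∣ a`
and unit linear coefficient, which Hensel's lemma solves; so `Q(L_p) = 2ℤ_p`.
-/

section CommRing

variable {R : Type*} [CommRing R] {m : ℕ} {M : Matrix (Fin m) (Fin m) R}

lemma Qf_add_of_isSymm (hM : M.IsSymm) (x z : Fin m → R) :
    Qf M (x + z) = Qf M x + Qf M z + 2 * Bf M x z := by
  rw [Qf_add, Bf, Matrix.dotProduct_mulVec z, ← Matrix.mulVec_transpose, hM.eq, dotProduct_comm]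
  ring

lemma Qf_single (i : Fin m) (c : R) : Qf M (Pi.single i c) = c ^ 2 * M i i := by
  simp only [Qf, mulVec_single, op_smul_eq_smul, dotProduct_smul, single_dotProduct, col_apply,
    smul_eq_mul]
  ring

lemma two_dvd_Qf_of_isSymm (hM : M.IsSymm) (hdiag : ∀ i, (2 : R) ∣ M i i) (v : Fin m → R) :
    (2 : R) ∣ Qf M v := by
  rw [← Finset.univ_sum_single v]
  induction (Finset.univ : Finset (Fin m)) using Finset.induction_on with
  | empty => simp [Qf]
  | insert i s hi ih =>
    rw [Finset.sum_insert hi, add_comm, Qf_add_of_isSymm hM, Qf_single]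
    exact dvd_add (dvd_add ih ((hdiag i).mul_left _)) (dvd_mul_right _ _)

lemma dvd_Bf_of_forall_dvd {d : R} (hM : ∀ i j, d ∣ M i j) (x z : Fin m → R) :
    d ∣ Bf M x z := by
  simp only [Bf, dotProduct, mulVec]
  exact Finset.dvd_sum fun i _ => (Finset.dvd_sum fun j _ => (hM i j).mul_right _).mul_left _

lemma mem_Lambda_of_dvd (k : ℕ) (hM : M.IsSymm) {x : Fin m → R}
    (hQ : ((2 * k : ℕ) : R) ∣ Qf M x)
    (hB : ∀ z, (k : R) ∣ Bf M x z) : x ∈ Lambda (2 * k) M := by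
  intro z
  rw [Qf_add_of_isSymm hM, add_right_comm, add_sub_cancel_right]
  exact dvd_add hQ (by push_cast; exact mul_dvd_mul_left 2 (hB z))

end CommRing

end Paper

namespace PadicInt

variable {p : ℕ} [Fact p.Prime]

lemma isUnit_iff_not_dvd {z : ℤ_[p]} : IsUnit z ↔ ¬ (p : ℤ_[p]) ∣ z := by
  rw [← norm_lt_one_iff_dvd, ← not_isUnit_iff, not_not]

lemma exists_quadratic_root {a b c : ℤ_[p]} (ha : (p : ℤ_[p]) ∣ a) (hb : IsUnit b) :
    ∃ s, a * s ^ 2 + b * s + c = 0 := by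
  obtain ⟨a, rfl⟩ := ha
  obtain ⟨b', hbb'⟩ := hb.exists_right_inv
  let F : Polynomial ℤ_[p] := .C (p * a) * .X ^ 2 + .C b * .X + .C c
  -- `s₀` kills the linear part, so `F s₀ ≡ 0 mod p` while `F' s₀ ≡ b` is a unit.
  let s₀ := -(c * b')
  have hF : F.eval s₀ = p * (a * s₀ ^ 2) := by
    simp only [F, s₀, Polynomial.eval_add, Polynomial.eval_mul, Polynomial.eval_C,
      Polynomial.eval_pow, Polynomial.eval_X]
    linear_combination (-c) * hbb'
  have hF' : F.derivative.eval s₀ = b + p * (2 * a * s₀) := by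
    simp only [F, Polynomial.derivative_add, Polynomial.derivative_mul, Polynomial.derivative_C,
      Polynomial.derivative_X_pow, Polynomial.derivative_X, Polynomial.eval_add,
      Polynomial.eval_mul, Polynomial.eval_C, Polynomial.eval_pow, Polynomial.eval_X,
      Polynomial.eval_zero, Polynomial.eval_one]
    ring
  have hF'_unit : IsUnit (F.derivative.eval s₀) := by
    rwa [isUnit_iff_not_dvd, hF', dvd_add_left (dvd_mul_right _ _), ← isUnit_iff_not_dvd]
  obtain ⟨s, hs, -⟩ := hensels_lemma (F := F) (a := s₀) (by
    simp only [Polynomial.coe_aeval_eq_eval]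
    rw [isUnit_iff.mp hF'_unit, one_pow, norm_lt_one_iff_dvd, hF]
    exact dvd_mul_right _ _)
  exact ⟨s, by simpa [F] using hs⟩

end PadicInt

namespace Paper

variable {p : ℕ} [Fact p.Prime] {m : ℕ}

lemma exists_Qf_eq_two_mul {M : Matrix (Fin m) (Fin m) ℤ_[p]} (hM : M.IsSymm)
    (heven : ∀ v, (2 : ℤ_[p]) ∣ Qf M v) {x z : Fin m → ℤ_[p]}
    (hx : ((2 * p : ℕ) : ℤ_[p]) ∣ Qf M x) (hxz : IsUnit (Bf M x z)) (t : ℤ_[p]) :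
    ∃ v, Qf M v = 2 * t := by
  obtain ⟨a, ha⟩ := hx
  obtain ⟨c, hc⟩ := dvd_sub (heven z) (dvd_mul_right 2 t)
  obtain ⟨s, hs⟩ := PadicInt.exists_quadratic_root (c := c) (dvd_mul_right (p : ℤ_[p]) a) hxz
  refine ⟨s • x + z, ?_⟩
  rw [Qf_add_of_isSymm hM, Qf_smul, Bf, smul_dotProduct, ← Bf, ha]
  push_cast
  linear_combination 2 * hs + hc

lemma two_dvd_diag_of_normalized {G : Matrix (Fin m) (Fin m) ℤ} (hnorm : Normalized G)
    (i : Fin m) : (2 : ℤ) ∣ G i i := by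
  have h : Qf G (Pi.single i 1) ∈ NormIdeal G := Ideal.subset_span ⟨_, rfl⟩
  rwa [hnorm, Ideal.mem_span_singleton, Qf_single, one_pow, one_mul] at h

lemma two_dvd_of_scaleIdeal {G : Matrix (Fin m) (Fin m) ℤ}
    (hscale : ScaleIdeal G = Ideal.span {(2 : ℤ)}) (i j : Fin m) : (2 : ℤ) ∣ G i j := by
  have h : G i j ∈ ScaleIdeal G := Ideal.subset_span ⟨i, j, rfl⟩
  rwa [hscale, Ideal.mem_span_singleton] at h

lemma QValuesFull_of_isUnit_Bf {G : Matrix (Fin m) (Fin m) ℤ} (hG : G.IsSymm)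
    (hnorm : Normalized G) {x z : Fin m → ℤ_[p]}
    (hx : ((2 * p : ℕ) : ℤ_[p]) ∣ Qf (padic p G) x) (hxz : IsUnit (Bf (padic p G) x z)) :
    QValuesFull p G := by
  have heven : ∀ v, (2 : ℤ_[p]) ∣ Qf (padic p G) v := two_dvd_Qf_of_isSymm (hG.map _)
    fun i => by exact_mod_cast Int.cast_dvd_cast _ _ (two_dvd_diag_of_normalized hnorm i)
  ext a
  constructor
  · rintro ⟨v, rfl⟩
    exact heven v
  · rintro ⟨t, rfl⟩
    exact exists_Qf_eq_two_mul (hG.map _) heven hx hxz t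

/-- `Λ_{2p}(W ∩ L_p) = W ∩ Λ_{2p}(L_p)` for any `ℚ_p`-subspace `W` of
`ℚ_p L`. -/
theorem lambda_subspace_intersection (p : ℕ) [Fact p.Prime] {m : ℕ}
    (G : Matrix (Fin m) (Fin m) ℤ) (hG : IsLat G) (hnorm : Normalized G)
    (hcond : ¬ QValuesFull p G ∨ (p = 2 ∧ ScaleIdeal G = Ideal.span {(2 : ℤ)}))
    (W : Subspace ℚ_[p] (Fin m → ℚ_[p])) :
    LambdaIn (2 * p) (padic p G) {x : Fin m → ℤ_[p] | (fun i => (x i : ℚ_[p])) ∈ W}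
      = {x : Fin m → ℤ_[p] | (fun i => (x i : ℚ_[p])) ∈ W}
          ∩ Lambda (2 * p) (padic p G) := by
  refine Set.Subset.antisymm (fun x ⟨hxW, hx⟩ => ⟨hxW, ?_⟩)
    fun x ⟨hxW, hx⟩ => ⟨hxW, fun z _ => hx z⟩
  have hQ : ((2 * p : ℕ) : ℤ_[p]) ∣ Qf (padic p G) x := by
    simpa [Qf] using hx 0 W.zero_mem
  refine mem_Lambda_of_dvd p (hG.1.map _) hQ fun z => ?_
  rcases hcond with hfull | ⟨rfl, hscale⟩
  · by_contra hB
    exact hfull (QValuesFull_of_isUnit_Bf hG.1 hnorm hQ (PadicInt.isUnit_iff_not_dvd.mpr hB))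
  · exact_mod_cast dvd_Bf_of_forall_dvd
      (fun i j => Int.cast_dvd_cast _ _ (two_dvd_of_scaleIdeal hscale i j)) x z

end Paper
end
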